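/- arXiv:1512.04905 — 3 statements merged into one kernel-verified Lean document; each statement's English description precedes it below -/
import Mathlib

section
/- Let K be a field of characteristic zero and F ∈ K[x₀,…,xₙ] a homogeneous form of degree d. Let r be the minimal non-negative integer such that there exist linear forms L₁,…,L_r with ∂F/∂x_k ∈ ⟨L₁^{d−1},…,L_r^{d−1}⟩ for all 0 ≤ k ≤ n. Then the Waring rank of F over K is at least r. -/
open MvPolynomial

/-- `L` is a linear form (a `K`-linear combination of the variables). -/
def IsLinearForm {K : Type*} [CommSemiring K] {n : ℕ}
    (L : MvPolynomial (Fin (n + 1)) K) : Prop :=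
  ∃ a : Fin (n + 1) → K, L = ∑ i, C (a i) * X i

theorem stmt_3 {K : Type*} [Field K] [CharZero K] (n d r : ℕ)
    (F : MvPolynomial (Fin (n + 1)) K) (hF : F.IsHomogeneous d)
    (hex : ∃ L : Fin r → MvPolynomial (Fin (n + 1)) K, (∀ j, IsLinearForm (L j)) ∧
      ∀ k : Fin (n + 1), pderiv k F ∈ Submodule.span K (Set.range fun j => L j ^ (d - 1)))
    (hmin : ∀ r' < r, ¬ ∃ L : Fin r' → MvPolynomial (Fin (n + 1)) K,
      (∀ j, IsLinearForm (L j)) ∧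
      ∀ k : Fin (n + 1), pderiv k F ∈ Submodule.span K (Set.range fun j => L j ^ (d - 1))) :
    ∀ (s : ℕ) (c : Fin s → K) (L : Fin s → MvPolynomial (Fin (n + 1)) K),
      (∀ j, IsLinearForm (L j)) → F = ∑ j, C (c j) * L j ^ d → r ≤ s := by
  intro s c L hL hFeq
  by_contra h
  push_neg at h
  refine hmin s h ⟨L, hL, fun k => ?_⟩
  rw [hFeq, map_sum]
  apply Submodule.sum_mem
  intro j _
  obtain ⟨a, ha⟩ := hL j
  have hderiv : pderiv k (L j) = C (a k) := by
    rw [ha, map_sum]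
    simp [pderiv_X, Pi.single_apply, Finset.sum_ite_eq']
  have : pderiv k (C (c j) * L j ^ d) =
      (c j * d * a k) • (L j ^ (d - 1)) := by
    rw [pderiv_mul, pderiv_C, pderiv_pow, hderiv, smul_eq_C_mul]
    simp only [map_mul, C_eq_coe_nat]
    ring
  rw [this]
  exact Submodule.smul_mem _ _ (Submodule.subset_span ⟨j, rfl⟩)
end

section
/- Let K be a field of characteristic zero, 1 ≤ p ≤ n, and F ∈ K[x₀,…,xₙ] a homogeneous form with partial derivatives F_k = ∂F/∂x_k. Suppose that for all λ₁,…,λ_p ∈ K the form F₀ + Σ_{k=1}^p λ_k F_k has Waring rank ≥ m over K, and that F₁,…,F_p are linearly independent over K. Then the Waring rank of F over K is at least m + p. -/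
open MvPolynomial

/-!
Write `F = ∑ⱼ cⱼ Lⱼ ^ d` with `Lⱼ = ∑ᵢ aⱼᵢ xᵢ`. Then `∂ₖF = ∑ⱼ d cⱼ aⱼₖ Lⱼ ^ (d - 1)` is the image of
its coefficient vector `uₖ ∈ Kˢ` under the linear map `T : v ↦ ∑ⱼ vⱼ Lⱼ ^ (d - 1)`, so the independence
of `∂₁F, …, ∂ₚF` forces `u₁, …, uₚ` to be independent. The `p`-dimensional affine space
`u₀ + span (u₁, …, uₚ)` contains a vector with at least `p` zero coordinates, hence some
`∂₀F + ∑ₖ λₖ ∂ₖF` is a combination of at most `s - p` powers `Lⱼ ^ (d - 1)`, and `m ≤ s - p`.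
-/

open Finset Module

section ZerosInSubspace

variable {K ι : Type*} [Field K] [DecidableEq K] [Fintype ι]

/-- If `y ∈ W` is a nonzero vector vanishing on the zeros of `u + w`, moving `w` along `y` kills
one more coordinate; such a `y` exists as soon as there are fewer zeros than `finrank W`. -/
theorem Submodule.exists_mem_card_zeros_lt_of_lt_finrank (W : Submodule K (ι → K))
    {u w : ι → K} (hw : w ∈ W) (hlt : #{j | u j + w j = 0} < finrank K W) :
    ∃ w' ∈ W, #{j | u j + w j = 0} < #{j | u j + w' j = 0} := by
  set J : Finset ι := {j | u j + w j = 0}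
  let restrict : W →ₗ[K] (J → K) :=
    LinearMap.pi fun j : J => (LinearMap.proj (j : ι)).comp W.subtype
  have hker : LinearMap.ker restrict ≠ ⊥ :=
    LinearMap.ker_ne_bot_of_finrank_lt (by simpa using hlt)
  obtain ⟨⟨y, hyW⟩, hy_ker, hy_ne⟩ := (Submodule.ne_bot_iff _).mp hker
  have hy_J : ∀ j ∈ J, y j = 0 := fun j hj => congr_fun hy_ker ⟨j, hj⟩
  obtain ⟨j, hj⟩ : ∃ j, y j ≠ 0 := Function.ne_iff.mp fun h => hy_ne (Subtype.ext h)
  refine ⟨w - ((u j + w j) / y j) • y, W.sub_mem hw (W.smul_mem _ hyW), card_lt_card ?_⟩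
  refine (ssubset_iff_of_subset fun i hi => ?_).mpr ⟨j, ?_, fun hjJ => hj (hy_J j hjJ)⟩
  · have hyi := hy_J i hi
    simp only [J, mem_filter, mem_univ, true_and] at hi ⊢
    simp [hi, hyi]
  · simp only [mem_filter, mem_univ, true_and, Pi.sub_apply, Pi.smul_apply, smul_eq_mul]
    field_simp
    ring

theorem Submodule.exists_mem_finrank_le_card_zeros (W : Submodule K (ι → K)) (u : ι → K) :
    ∃ w ∈ W, finrank K W ≤ #{j | u j + w j = 0} := by
  suffices ∀ k ≤ finrank K W, ∃ w ∈ W, k ≤ #{j | u j + w j = 0} from this _ le_rfl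
  intro k hk
  induction k with
  | zero => exact ⟨0, W.zero_mem, Nat.zero_le _⟩
  | succ k ih =>
    obtain ⟨w, hw, hkw⟩ := ih (by omega)
    by_cases hmore : k + 1 ≤ #{j | u j + w j = 0}
    · exact ⟨w, hw, hmore⟩
    · obtain ⟨w', hw', hlt⟩ := W.exists_mem_card_zeros_lt_of_lt_finrank (u := u) hw (by omega)
      exact ⟨w', hw', by omega⟩

end ZerosInSubspace

theorem Finset.exists_sum_eq_sum_fin_of_support_subset {ι M : Type*} [Fintype ι]
    [AddCommMonoid M] {f : ι → M} (S : Finset ι) (hS : ∀ j ∉ S, f j = 0) :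
    ∃ e : Fin #S → ι, ∑ j, f j = ∑ t, f (e t) := by
  refine ⟨fun t => S.equivFin.symm t, ?_⟩
  rw [← sum_subset (subset_univ S) fun j _ hj => hS j hj, ← sum_coe_sort S,
    ← S.equivFin.symm.sum_comp]

namespace MvPolynomial

variable {R σ ι : Type*} [CommRing R] [Fintype σ] [DecidableEq σ] [Fintype ι]

theorem pderiv_sum_C_mul_X (a : σ → R) (k : σ) : pderiv k (∑ i, C (a i) * X i) = C (a k) := by
  simp [pderiv_X, Pi.single_apply]

theorem pderiv_sum_C_mul_pow {L : ι → MvPolynomial σ R} {a : ι → σ → R}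
    (hL : ∀ j, L j = ∑ i, C (a j i) * X i) (c : ι → R) (e : ℕ) (k : σ) :
    pderiv k (∑ j, C (c j) * L j ^ e) = ∑ j, C (e * c j * a j k) * L j ^ (e - 1) := by
  refine (map_sum _ _ _).trans (sum_congr rfl fun j _ => ?_)
  rw [pderiv_C_mul, Derivation.leibniz_pow, hL j, pderiv_sum_C_mul_X, ← hL j, nsmul_eq_mul,
    smul_eq_mul]
  simp only [map_mul, map_natCast]
  ring

end MvPolynomial

theorem stmt_4_general {K : Type*} [Field K] (n d p m : ℕ)
    (hpn : p ≤ n)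
    (F : MvPolynomial (Fin (n + 1)) K)
    (hind : LinearIndependent K fun k : Fin p => pderiv (Fin.succ (Fin.castLE hpn k)) F)
    (hlow : ∀ lam : Fin p → K, ∀ (s : ℕ) (c : Fin s → K)
        (L : Fin s → MvPolynomial (Fin (n + 1)) K), (∀ j, IsLinearForm (L j)) →
        pderiv 0 F + ∑ k : Fin p, C (lam k) * pderiv (Fin.succ (Fin.castLE hpn k)) F =
          ∑ j, C (c j) * L j ^ (d - 1) → m ≤ s) :
    ∀ (s : ℕ) (c : Fin s → K) (L : Fin s → MvPolynomial (Fin (n + 1)) K),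
      (∀ j, IsLinearForm (L j)) → F = ∑ j, C (c j) * L j ^ d → m + p ≤ s := by
  classical
  intro s c L hL hF
  choose a ha using hL
  let T := Fintype.linearCombination K fun j => L j ^ (d - 1)
  have hT (v : Fin s → K) : T v = ∑ j, C (v j) * L j ^ (d - 1) := by
    simp [T, Fintype.linearCombination_apply, smul_eq_C_mul]
  let u : Fin (n + 1) → Fin s → K := fun k j => d * c j * a j k
  have hderiv (k : Fin (n + 1)) : pderiv k F = T (u k) := by
    rw [hT, hF, pderiv_sum_C_mul_pow ha]
  let idx : Fin p → Fin (n + 1) := fun k => Fin.succ (Fin.castLE hpn k)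
  have hu : LinearIndependent K (u ∘ idx) :=
    LinearIndependent.of_comp T (by simpa [Function.comp_def, hderiv] using hind)
  obtain ⟨w, hw, hzeros⟩ :=
    (Submodule.span K (Set.range (u ∘ idx))).exists_mem_finrank_le_card_zeros (u 0)
  rw [finrank_span_eq_card hu, Fintype.card_fin] at hzeros
  obtain ⟨lam, hlam⟩ := (Submodule.mem_span_range_iff_exists_fun K).mp hw
  set v := u 0 + w
  change p ≤ #{j | v j = 0} at hzeros
  have hcomb : pderiv 0 F + ∑ k, C (lam k) * pderiv (idx k) F = T v := by
    simp [v, ← hlam, hderiv, smul_eq_C_mul]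
  obtain ⟨e, he⟩ := exists_sum_eq_sum_fin_of_support_subset
    (f := fun j => C (v j) * L j ^ (d - 1)) {j | v j ≠ 0} (by simp +contextual)
  have hm := hlow lam _ _ _ (fun t => ⟨a (e t), ha (e t)⟩) (hcomb.trans ((hT v).trans he))
  have hcard := card_filter_add_card_filter_not (s := univ) fun j => v j ≠ 0
  simp only [not_not, card_univ, Fintype.card_fin] at hcard
  omega

theorem stmt_4 {K : Type*} [Field K] [CharZero K] (n d p m : ℕ)
    (hp : 1 ≤ p) (hpn : p ≤ n)
    (F : MvPolynomial (Fin (n + 1)) K) (hF : F.IsHomogeneous d)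
    (hind : LinearIndependent K fun k : Fin p => pderiv (Fin.succ (Fin.castLE hpn k)) F)
    (hlow : ∀ lam : Fin p → K, ∀ (s : ℕ) (c : Fin s → K)
        (L : Fin s → MvPolynomial (Fin (n + 1)) K), (∀ j, IsLinearForm (L j)) →
        pderiv 0 F + ∑ k : Fin p, C (lam k) * pderiv (Fin.succ (Fin.castLE hpn k)) F =
          ∑ j, C (c j) * L j ^ (d - 1) → m ≤ s) :
    ∀ (s : ℕ) (c : Fin s → K) (L : Fin s → MvPolynomial (Fin (n + 1)) K),
      (∀ j, IsLinearForm (L j)) → F = ∑ j, C (c j) * L j ^ d → m + p ≤ s :=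
  stmt_4_general n d p m hpn F hind hlow
end

section
/- Let A = x₀(x₀² + x₁² + … + xₙ²) ∈ ℂ[x₀,…,xₙ] with partial derivatives A_k = ∂A/∂x_k. For all λ₁,…,λₙ ∈ ℂ, the quadratic form A₀ + Σ_{k=1}^n λ_k A_k has rank at least n (as a quadratic form, i.e., the rank of its associated symmetric matrix is at least n). -/
open MvPolynomial

/-- The symmetric Gram matrix associated to a quadratic form `Q` in `n + 1` variables. -/
noncomputable def gramMatrix (n : ℕ) (Q : MvPolynomial (Fin (n + 1)) ℂ) :
    Matrix (Fin (n + 1)) (Fin (n + 1)) ℂ :=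
  Matrix.of fun i j =>
    if i = j then coeff (Finsupp.single i 2) Q
    else coeff (Finsupp.single i 1 + Finsupp.single j 1) Q / 2

lemma aux_pderiv (n : ℕ) (i : Fin (n+1)) :
    pderiv (R := ℂ) i (X 0 * ∑ j : Fin (n+1), X j ^ 2) =
      (if i = 0 then ∑ j : Fin (n+1), X j ^ 2 else 0) + X 0 * (2 * X i) := by
  simp [pderiv_mul, pderiv_X, map_sum, Pi.single_apply, Finset.sum_ite_eq,
    mul_ite, mul_zero, mul_one, eq_comm, mul_comm, add_comm]

lemma aux_single_ne (n : ℕ) (i j : Fin n) (hij : i ≠ j) (x : Fin (n+1)) :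
    (Finsupp.single x 2 : Fin (n+1) →₀ ℕ) ≠ Finsupp.single i.succ 1 + Finsupp.single j.succ 1 := by
  intro h
  have h1 := DFunLike.congr_fun h i.succ
  have h2 := DFunLike.congr_fun h j.succ
  have hij1 : (i.succ : Fin (n+1)) ≠ j.succ := (Fin.succ_injective n).ne hij
  by_cases hx : x = i.succ
  · subst hx
    simp [Finsupp.single_apply, hij1, hij1.symm] at h2
  · simp [Finsupp.single_apply, hx, hij1.symm] at h1

theorem stmt_8 (n : ℕ) (hn : 1 ≤ n) (lam : Fin n → ℂ) :
    n ≤ (gramMatrix n (pderiv 0 (X 0 * ∑ i, X i ^ 2) +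
      ∑ k : Fin n, C (lam k) *
        pderiv k.succ (X 0 * ∑ i : Fin (n + 1), X i ^ 2))).rank := by
  set Q : MvPolynomial (Fin (n+1)) ℂ :=
    pderiv 0 (X 0 * ∑ i, X i ^ 2) +
      ∑ k : Fin n, C (lam k) * pderiv k.succ (X 0 * ∑ i : Fin (n + 1), X i ^ 2) with hQdef
  have hQ : Q = ((∑ j : Fin (n+1), X j ^ 2) + X 0 * (2 * X 0)) +
      ∑ k : Fin n, C (lam k) * (X 0 * (2 * X (k.succ : Fin (n+1)))) := by
    rw [hQdef]
    congr 1
    · rw [aux_pderiv]; simp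
    · refine Finset.sum_congr rfl fun k _ => ?_
      rw [aux_pderiv]
      simp [Fin.succ_ne_zero]
  set M := gramMatrix n Q with hM
  -- key entry computation
  have key : ∀ i j : Fin n, M i.succ j.succ = if i = j then 1 else 0 := by
    intro i j
    by_cases hij : i = j
    · subst hij
      simp only [hM, gramMatrix, Matrix.of_apply, if_pos rfl]
      rw [hQ]
      simp [coeff_add, coeff_sum, coeff_C_mul, coeff_X_pow, coeff_mul_X', coeff_X_mul',
        coeff_X', Finsupp.single_eq_single_iff, Finsupp.support_single_ne_zero,
        (Fin.succ_ne_zero i).symm]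
    · have hij' : (i.succ : Fin (n+1)) ≠ j.succ := (Fin.succ_injective n).ne hij
      simp only [hM, gramMatrix, Matrix.of_apply, if_neg hij', if_neg hij]
      rw [hQ]
      have hne := aux_single_ne n i j hij
      simp [coeff_add, coeff_sum, coeff_C_mul, coeff_X_pow, coeff_mul_X', coeff_X_mul',
        coeff_X', Finsupp.mem_support_iff, Finsupp.single_apply, Finsupp.add_apply,
        Fin.succ_ne_zero, hne]
  -- rank argument : the columns indexed by succ are linearly independent
  have hw : LinearIndependent ℂ (fun j : Fin n => M.mulVec (Pi.single j.succ 1)) := by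
    rw [Fintype.linearIndependent_iff]
    intro g hg i
    have := congrFun hg i.succ
    simp only [Matrix.mulVec_single, mul_one, Finset.sum_apply, Pi.smul_apply,
      smul_eq_mul, Pi.zero_apply] at this
    simpa [key, Finset.sum_ite_eq', mul_comm] using this
  have hv : LinearIndependent ℂ (fun j : Fin n =>
      (⟨M.mulVec (Pi.single j.succ 1), ⟨Pi.single j.succ 1, rfl⟩⟩ :
        LinearMap.range M.mulVecLin)) := by
    apply LinearIndependent.of_comp (LinearMap.range M.mulVecLin).subtype
    exact hw
  calc n = Fintype.card (Fin n) := (Fintype.card_fin n).symm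
    _ ≤ Module.finrank ℂ (LinearMap.range M.mulVecLin) :=
        LinearIndependent.fintype_card_le_finrank hv
    _ = M.rank := rfl
end
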